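/- arXiv:1409.0140 — 2 statements merged into one kernel-verified Lean document; each statement's English description precedes it below -/
import Mathlib

section
/- Brezis–Lieb lemma for variable exponents: if (η_n) ⊂ L^{h(x)}(R^N, R^m) satisfies η_n(x) → η(x) a.e. in R^N and sup_n ||η_n||_{L^{h(x)}} < ∞, then η ∈ L^{h(x)}(R^N, R^m) and ∫ ( |η_n|^{h(x)} − |η_n − η|^{h(x)} − |η|^{h(x)} ) dx → 0 as n → ∞. -/
open MeasureTheory Filter Topology

noncomputable section

/-- Euclidean space `ℝ^N`. -/
abbrev RN (N : ℕ) : Type := EuclideanSpace ℝ (Fin N)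

/-- Euclidean space `ℝ^m` (target of vector-valued functions). -/
abbrev Rm (m : ℕ) : Type := EuclideanSpace ℝ (Fin m)

/-- The Luxemburg norm on the vector-valued space `L^{h(x)}(ℝ^N, ℝ^m)`. -/
def luxNormV {N m : ℕ} (h : RN N → ℝ) (u : RN N → Rm m) : ℝ :=
  sInf {t : ℝ | 0 < t ∧ (∫ x, (‖u x‖ / t) ^ h x) ≤ 1}

/-!
For `0 ≤ p ≤ P` and every `ε > 0` there is `K` with
`|‖a‖ ^ p - ‖a - b‖ ^ p - ‖b‖ ^ p| ≤ ε ‖a - b‖ ^ p + K ‖b‖ ^ p`, obtained by splitting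
`(s + r) ^ p ≤ (1 + δ) ^ P s ^ p + (1 + 1/δ) ^ P r ^ p` according to which summand dominates.
Applied with `a = η n x`, `b = η₀ x`, the excess `max (|f n| - ε ‖η n - η₀‖ ^ h) 0` of the
integrand `f n` is dominated by `K ‖η₀‖ ^ h` and tends to `0` a.e., so its integral vanishes by
dominated convergence, while `ε ∫ ‖η n - η₀‖ ^ h` is `O(ε)` uniformly in `n`. That uniform bound
holds because a bound `C` on the Luxemburg norms bounds the modulars `∫ ‖η n‖ ^ h` by
`max 1 ((C + 1) ^ P)`; Fatou's lemma transfers this to `η₀`, which gives `η₀ ∈ L^{h(x)}` as well.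
-/

lemma rpow_le_max_one_rpow {a p P : ℝ} (ha : 0 ≤ a) (hp : 0 ≤ p) (hpP : p ≤ P) :
    a ^ p ≤ max 1 (a ^ P) := by
  rcases le_total a 1 with ha1 | ha1
  · exact (Real.rpow_le_one ha ha1 hp).trans (le_max_left _ _)
  · exact (Real.rpow_le_rpow_of_exponent_le ha1 hpP).trans (le_max_right _ _)

lemma mul_rpow_le_of_one_le {c w p P : ℝ} (hc : 1 ≤ c) (hw : 0 ≤ w) (hpP : p ≤ P) :
    (c * w) ^ p ≤ c ^ P * w ^ p := by
  rw [Real.mul_rpow (by linarith) hw]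
  exact mul_le_mul_of_nonneg_right (Real.rpow_le_rpow_of_exponent_le hc hpP) (by positivity)

lemma add_rpow_le {u v p P δ : ℝ} (hu : 0 ≤ u) (hv : 0 ≤ v) (hp : 0 ≤ p) (hpP : p ≤ P)
    (hδ : 0 < δ) : (u + v) ^ p ≤ (1 + δ) ^ P * u ^ p + (1 + 1 / δ) ^ P * v ^ p := by
  rcases le_or_gt v (δ * u) with hvu | huv
  · calc (u + v) ^ p ≤ ((1 + δ) * u) ^ p := Real.rpow_le_rpow (by positivity) (by linarith) hp
      _ ≤ (1 + δ) ^ P * u ^ p := mul_rpow_le_of_one_le (by linarith) hu hpP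
      _ ≤ _ := le_add_of_nonneg_right (by positivity)
  · have huv' : u ≤ 1 / δ * v := by
      rw [div_mul_eq_mul_div, one_mul, le_div_iff₀ hδ]; linarith
    calc (u + v) ^ p ≤ ((1 + 1 / δ) * v) ^ p :=
          Real.rpow_le_rpow (by positivity) (by linarith) hp
      _ ≤ (1 + 1 / δ) ^ P * v ^ p :=
          mul_rpow_le_of_one_le (le_add_of_nonneg_right (by positivity)) hv hpP
      _ ≤ _ := le_add_of_nonneg_left (by positivity)

lemma abs_rpow_sub_rpow_le {x y d p P δ : ℝ} (hx : 0 ≤ x) (hy : 0 ≤ y) (hd : 0 ≤ d)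
    (hxy : x ≤ y + d) (hyx : y ≤ x + d) (hp : 0 ≤ p) (hpP : p ≤ P) (hδ : 0 < δ) :
    |x ^ p - y ^ p| ≤ ((1 + δ) ^ P - 1) * y ^ p + (1 + 1 / δ) ^ P * d ^ p := by
  have hA : 1 ≤ (1 + δ) ^ P := Real.one_le_rpow (by linarith) (hp.trans hpP)
  have hx' : x ^ p ≤ (1 + δ) ^ P * y ^ p + (1 + 1 / δ) ^ P * d ^ p :=
    (Real.rpow_le_rpow hx hxy hp).trans (add_rpow_le hy hd hp hpP hδ)
  have hy' : y ^ p ≤ (1 + δ) ^ P * x ^ p + (1 + 1 / δ) ^ P * d ^ p :=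
    (Real.rpow_le_rpow hy hyx hp).trans (add_rpow_le hx hd hp hpP hδ)
  have hxp := Real.rpow_nonneg hx p
  have hyp := Real.rpow_nonneg hy p
  have hdp := Real.rpow_nonneg hd p
  have hK : 0 ≤ (1 + 1 / δ) ^ P := by positivity
  rw [abs_le]
  refine ⟨?_, by linarith⟩
  rcases le_total (y ^ p) (x ^ p) with hle | hle
  · nlinarith
  · nlinarith [mul_nonneg (sub_nonneg.2 hA) (sub_nonneg.2 hle)]

lemma exists_pos_one_add_rpow_le (P : ℝ) {ε : ℝ} (hε : 0 < ε) :
    ∃ δ > 0, (1 + δ) ^ P ≤ 1 + ε := by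
  have hcont : Tendsto (fun δ : ℝ => (1 + δ) ^ P) (𝓝[>] 0) (𝓝 1) := by
    have := ((tendsto_const_nhds (x := (1 : ℝ))).add (tendsto_id (x := 𝓝 (0 : ℝ)))).rpow_const
      (p := P) (Or.inl (by norm_num))
    simpa using this.mono_left nhdsWithin_le_nhds
  obtain ⟨δ, hδε, hδ⟩ :=
    ((hcont.eventually (ge_mem_nhds (lt_add_of_pos_right 1 hε))).and self_mem_nhdsWithin).exists
  exact ⟨δ, hδ, hδε⟩

lemma exists_abs_rpow_norm_sub_le {E : Type*} [SeminormedAddCommGroup E] (P : ℝ) {ε : ℝ}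
    (hε : 0 < ε) : ∃ K, ∀ p, 0 ≤ p → p ≤ P → ∀ a b : E,
      |‖a‖ ^ p - ‖a - b‖ ^ p - ‖b‖ ^ p| ≤ ε * ‖a - b‖ ^ p + K * ‖b‖ ^ p := by
  obtain ⟨δ, hδ, hδε⟩ := exists_pos_one_add_rpow_le P hε
  refine ⟨(1 + 1 / δ) ^ P + 1, fun p hp hpP a b => ?_⟩
  have key := abs_rpow_sub_rpow_le (norm_nonneg a) (norm_nonneg (a - b)) (norm_nonneg b)
    (norm_le_norm_sub_add a b) (norm_sub_le a b) hp hpP hδ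
  have hsmall : ((1 + δ) ^ P - 1) * ‖a - b‖ ^ p ≤ ε * ‖a - b‖ ^ p :=
    mul_le_mul_of_nonneg_right (by linarith) (by positivity)
  have hb := Real.rpow_nonneg (norm_nonneg b) p
  rw [abs_le] at key ⊢
  constructor <;> linarith [key.1, key.2]

lemma norm_sub_rpow_le {E : Type*} [SeminormedAddCommGroup E] {p P : ℝ} (hp : 0 ≤ p)
    (hpP : p ≤ P) (a b : E) : ‖a - b‖ ^ p ≤ 2 ^ P * (‖a‖ ^ p + ‖b‖ ^ p) := by
  have := add_rpow_le (norm_nonneg a) (norm_nonneg b) hp hpP one_pos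
  norm_num at this
  linarith [Real.rpow_le_rpow (norm_nonneg _) (norm_sub_le a b) hp]

lemma tendsto_rpow_norm_sub_rpow_norm_sub {ι E : Type*} [SeminormedAddCommGroup E]
    {l : Filter ι} {a : ι → E} {a₀ : E} {p : ℝ} (hp : 0 < p) (ha : Tendsto a l (𝓝 a₀)) :
    Tendsto (fun n => ‖a n‖ ^ p - ‖a n - a₀‖ ^ p - ‖a₀‖ ^ p) l (𝓝 0) := by
  have h₁ := ha.norm.rpow_const (Or.inr hp.le)
  have h₂ := (ha.sub_const a₀).norm.rpow_const (Or.inr hp.le)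
  simpa [Real.zero_rpow hp.ne'] using (h₁.sub h₂).sub_const (‖a₀‖ ^ p)

section Integrals

variable {α : Type*} [MeasurableSpace α] {μ : Measure α}

lemma integrable_and_integral_le_of_tendsto {f : ℕ → α → ℝ} {F : α → ℝ} {B : ℝ}
    (hf : ∀ n, Integrable (f n) μ) (hf0 : ∀ n, 0 ≤ᵐ[μ] f n)
    (hlim : ∀ᵐ x ∂μ, Tendsto (fun n => f n x) atTop (𝓝 (F x)))
    (hB : ∀ n, ∫ x, f n x ∂μ ≤ B) :
    Integrable F μ ∧ ∫ x, F x ∂μ ≤ B := by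
  have hF0 : 0 ≤ᵐ[μ] F := by
    filter_upwards [hlim, ae_all_iff.2 hf0] with x hx hx0 using ge_of_tendsto' hx hx0
  have hB0 : 0 ≤ B := (integral_nonneg_of_ae (hf0 0)).trans (hB 0)
  have hlint : ∫⁻ x, ENNReal.ofReal (F x) ∂μ ≤ ENNReal.ofReal B := calc
    ∫⁻ x, ENNReal.ofReal (F x) ∂μ = ∫⁻ x, liminf (fun n => ENNReal.ofReal (f n x)) atTop ∂μ :=
        lintegral_congr_ae <| hlim.mono fun x hx =>
          ((ENNReal.continuous_ofReal.tendsto _).comp hx).liminf_eq.symm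
    _ ≤ liminf (fun n => ∫⁻ x, ENNReal.ofReal (f n x) ∂μ) atTop :=
        lintegral_liminf_le' fun n => (hf n).aemeasurable.ennreal_ofReal
    _ ≤ ENNReal.ofReal B := liminf_le_of_frequently_le' <| Frequently.of_forall fun n => by
        rw [← ofReal_integral_eq_lintegral_ofReal (hf n) (hf0 n)]
        exact ENNReal.ofReal_le_ofReal (hB n)
  have hFi : Integrable F μ :=
    ⟨aestronglyMeasurable_of_tendsto_ae _ (fun n => (hf n).1) hlim,
      (hasFiniteIntegral_iff_ofReal hF0).2 (hlint.trans_lt ENNReal.ofReal_lt_top)⟩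
  refine ⟨hFi, ?_⟩
  rwa [← ENNReal.ofReal_le_ofReal_iff hB0, ofReal_integral_eq_lintegral_ofReal hFi hF0]

lemma tendsto_integral_max_abs_sub_mul_zero {f g : ℕ → α → ℝ} {G : α → ℝ} {c : ℝ}
    (hf : ∀ n, Integrable (f n) μ) (hg : ∀ n, Integrable (g n) μ) (hg0 : ∀ n, 0 ≤ᵐ[μ] g n)
    (hc : 0 ≤ c) (hG : Integrable G μ) (hdom : ∀ n, ∀ᵐ x ∂μ, |f n x| ≤ c * g n x + G x)
    (hlim : ∀ᵐ x ∂μ, Tendsto (fun n => f n x) atTop (𝓝 0)) :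
    Tendsto (fun n => ∫ x, max (|f n x| - c * g n x) 0 ∂μ) atTop (𝓝 0) := by
  have hbound n : ∀ᵐ x ∂μ, ‖max (|f n x| - c * g n x) 0‖ ≤ |G x| := by
    filter_upwards [hdom n] with x hx
    rw [Real.norm_of_nonneg (le_max_right _ _)]
    exact max_le (by linarith [le_abs_self (G x)]) (abs_nonneg _)
  have hpt : ∀ᵐ x ∂μ, Tendsto (fun n => max (|f n x| - c * g n x) 0) atTop (𝓝 0) := by
    filter_upwards [hlim, ae_all_iff.2 hg0] with x hx hx0
    refine squeeze_zero (fun n => le_max_right _ _) (fun n => ?_) (by simpa using hx.abs)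
    exact max_le (by nlinarith [show 0 ≤ g n x from hx0 n]) (abs_nonneg _)
  simpa using tendsto_integral_of_dominated_convergence (fun x => |G x|)
    (fun n => ((hf n).abs.sub ((hg n).const_mul c)).pos_part.1) hG.abs hbound hpt

theorem tendsto_integral_zero_of_abs_le_eps_mul_add {f g : ℕ → α → ℝ} {F : α → ℝ} {B : ℝ}
    (hf : ∀ n, Integrable (f n) μ) (hg : ∀ n, Integrable (g n) μ) (hg0 : ∀ n, 0 ≤ᵐ[μ] g n)
    (hgB : ∀ n, ∫ x, g n x ∂μ ≤ B) (hF : Integrable F μ)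
    (hdom : ∀ ε > 0, ∃ K, ∀ n, ∀ᵐ x ∂μ, |f n x| ≤ ε * g n x + K * F x)
    (hlim : ∀ᵐ x ∂μ, Tendsto (fun n => f n x) atTop (𝓝 0)) :
    Tendsto (fun n => ∫ x, f n x ∂μ) atTop (𝓝 0) := by
  have hB0 : 0 ≤ B := (integral_nonneg_of_ae (hg0 0)).trans (hgB 0)
  refine Metric.tendsto_atTop.2 fun δ hδ => ?_
  set ε := δ / (2 * (B + 1))
  have hε : 0 < ε := by positivity
  have hεB : ε * B ≤ δ / 2 := by
    rw [div_mul_eq_mul_div, div_le_div_iff₀ (by positivity) two_pos]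
    nlinarith
  obtain ⟨K, hK⟩ := hdom ε hε
  have hexcess := tendsto_integral_max_abs_sub_mul_zero hf hg hg0 hε.le (hF.const_mul K) hK hlim
  obtain ⟨n₀, hn₀⟩ := eventually_atTop.1 (hexcess.eventually_lt_const (half_pos hδ))
  refine ⟨n₀, fun n hn => ?_⟩
  have hexcess_int : Integrable (fun x => max (|f n x| - ε * g n x) 0) μ :=
    ((hf n).abs.sub ((hg n).const_mul ε)).pos_part
  rw [Real.dist_eq, sub_zero]
  calc |∫ x, f n x ∂μ| ≤ ∫ x, |f n x| ∂μ := abs_integral_le_integral_abs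
    _ ≤ ∫ x, (max (|f n x| - ε * g n x) 0 + ε * g n x) ∂μ :=
        integral_mono (hf n).abs (hexcess_int.add ((hg n).const_mul ε)) fun x => by
          linarith [le_max_left (|f n x| - ε * g n x) 0]
    _ = ∫ x, max (|f n x| - ε * g n x) 0 ∂μ + ε * ∫ x, g n x ∂μ := by
        rw [integral_add hexcess_int ((hg n).const_mul ε), integral_const_mul]
    _ < δ / 2 + δ / 2 := add_lt_add_of_lt_of_le (hn₀ n hn)
        ((mul_le_mul_of_nonneg_left (hgB n) hε.le).trans hεB)
    _ = δ := add_halves δ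

lemma integrable_div_rpow {g h : α → ℝ} {P t : ℝ} (hgm : Measurable g) (hhm : Measurable h)
    (hg0 : ∀ x, 0 ≤ g x) (ht : 0 < t) (hh : ∀ᵐ x ∂μ, 0 ≤ h x ∧ h x ≤ P)
    (hgi : Integrable (fun x => g x ^ h x) μ) :
    Integrable (fun x => (g x / t) ^ h x) μ := by
  refine (hgi.const_mul (max 1 (t⁻¹ ^ P))).mono' ((hgm.div_const t).pow hhm).aestronglyMeasurable ?_
  filter_upwards [hh] with x ⟨h0, hP⟩
  rw [Real.norm_of_nonneg (by have := hg0 x; positivity), div_eq_mul_inv,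
    Real.mul_rpow (hg0 x) (by positivity), mul_comm (max _ _)]
  exact mul_le_mul_of_nonneg_left (rpow_le_max_one_rpow (by positivity) h0 hP)
    (Real.rpow_nonneg (hg0 x) _)

lemma exists_integral_div_rpow_le_one {g h : α → ℝ} (hgm : Measurable g) (hhm : Measurable h)
    (hg0 : ∀ x, 0 ≤ g x) (hh : ∀ᵐ x ∂μ, 1 ≤ h x) (hgi : Integrable (fun x => g x ^ h x) μ) :
    ∃ t > 0, ∫ x, (g x / t) ^ h x ∂μ ≤ 1 := by
  set t := ∫ x, g x ^ h x ∂μ + 1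
  have hI : 0 ≤ ∫ x, g x ^ h x ∂μ := integral_nonneg fun x => Real.rpow_nonneg (hg0 x) _
  have ht : 1 ≤ t := le_add_of_nonneg_left hI
  have hle : ∀ᵐ x ∂μ, (g x / t) ^ h x ≤ g x ^ h x / t := by
    filter_upwards [hh] with x hx
    rw [Real.div_rpow (hg0 x) (by positivity)]
    exact div_le_div_of_nonneg_left (Real.rpow_nonneg (hg0 x) _) (by positivity)
      (Real.self_le_rpow_of_one_le ht hx)
  have hti : Integrable (fun x => (g x / t) ^ h x) μ :=
    (hgi.div_const t).mono' ((hgm.div_const t).pow hhm).aestronglyMeasurable <| by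
      filter_upwards [hle] with x hx
      rwa [Real.norm_of_nonneg (by have := hg0 x; positivity)]
  refine ⟨t, by positivity, ?_⟩
  calc ∫ x, (g x / t) ^ h x ∂μ ≤ ∫ x, g x ^ h x / t ∂μ := integral_mono_ae hti (hgi.div_const t) hle
    _ ≤ 1 := by rw [integral_div, div_le_one (by positivity)]; linarith

lemma integral_rpow_le_of_integral_div_rpow_le_one {g h : α → ℝ} {P t : ℝ} (hg0 : ∀ x, 0 ≤ g x)
    (ht : 0 < t) (hh : ∀ᵐ x ∂μ, 0 ≤ h x ∧ h x ≤ P) (hgi : Integrable (fun x => g x ^ h x) μ)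
    (hgti : Integrable (fun x => (g x / t) ^ h x) μ) (h1 : ∫ x, (g x / t) ^ h x ∂μ ≤ 1) :
    ∫ x, g x ^ h x ∂μ ≤ max 1 (t ^ P) := by
  have hle : ∀ᵐ x ∂μ, g x ^ h x ≤ max 1 (t ^ P) * (g x / t) ^ h x := by
    filter_upwards [hh] with x ⟨h0, hP⟩
    have hgt : 0 ≤ g x / t := div_nonneg (hg0 x) ht.le
    conv_lhs => rw [← mul_div_cancel₀ (g x) ht.ne', Real.mul_rpow ht.le hgt]
    exact mul_le_mul_of_nonneg_right (rpow_le_max_one_rpow ht.le h0 hP) (Real.rpow_nonneg hgt _)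
  calc ∫ x, g x ^ h x ∂μ ≤ ∫ x, max 1 (t ^ P) * (g x / t) ^ h x ∂μ :=
        integral_mono_ae hgi (hgti.const_mul _) hle
    _ = max 1 (t ^ P) * ∫ x, (g x / t) ^ h x ∂μ := integral_const_mul _ _
    _ ≤ max 1 (t ^ P) := mul_le_of_le_one_right (by positivity) h1

lemma integrable_rpow_norm_sub {E : Type*} [NormedAddCommGroup E] [MeasurableSpace E]
    [BorelSpace E] [SecondCountableTopology E] {u v : α → E} {h : α → ℝ} {P : ℝ}
    (hum : Measurable u) (hvm : Measurable v) (hhm : Measurable h)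
    (hh : ∀ᵐ x ∂μ, 0 ≤ h x ∧ h x ≤ P) (hui : Integrable (fun x => ‖u x‖ ^ h x) μ)
    (hvi : Integrable (fun x => ‖v x‖ ^ h x) μ) :
    Integrable (fun x => ‖u x - v x‖ ^ h x) μ ∧
      ∫ x, ‖u x - v x‖ ^ h x ∂μ ≤ 2 ^ P * (∫ x, ‖u x‖ ^ h x ∂μ + ∫ x, ‖v x‖ ^ h x ∂μ) := by
  have hle : ∀ᵐ x ∂μ, ‖u x - v x‖ ^ h x ≤ 2 ^ P * (‖u x‖ ^ h x + ‖v x‖ ^ h x) := by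
    filter_upwards [hh] with x ⟨h0, hP⟩ using norm_sub_rpow_le h0 hP (u x) (v x)
  have hsum := (hui.add hvi).const_mul (2 ^ P)
  have hi : Integrable (fun x => ‖u x - v x‖ ^ h x) μ :=
    hsum.mono' ((hum.sub hvm).norm.pow hhm).aestronglyMeasurable <| by
      filter_upwards [hle] with x hx
      rwa [Real.norm_of_nonneg (by positivity)]
  refine ⟨hi, ?_⟩
  calc ∫ x, ‖u x - v x‖ ^ h x ∂μ ≤ ∫ x, 2 ^ P * (‖u x‖ ^ h x + ‖v x‖ ^ h x) ∂μ :=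
        integral_mono_ae hi hsum hle
    _ = _ := by rw [integral_const_mul, integral_add hui hvi]

end Integrals

lemma integral_rpow_norm_le_of_luxNormV_le {N m : ℕ} {h : RN N → ℝ} {u : RN N → Rm m} {P C : ℝ}
    (hhm : Measurable h) (hum : Measurable u) (hh : ∀ᵐ x, 1 ≤ h x ∧ h x ≤ P) (hP : 0 ≤ P)
    (hui : Integrable (fun x => ‖u x‖ ^ h x)) (hC : luxNormV h u ≤ C) :
    ∫ x, ‖u x‖ ^ h x ≤ max 1 ((C + 1) ^ P) := by
  -- without nonemptiness `hC` says nothing, since `sInf ∅ = 0`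
  have hne : {t : ℝ | 0 < t ∧ ∫ x, (‖u x‖ / t) ^ h x ≤ 1}.Nonempty :=
    exists_integral_div_rpow_le_one hum.norm hhm (fun _ => norm_nonneg _)
      (hh.mono fun _ hx => hx.1) hui
  obtain ⟨t, ⟨ht, ht1⟩, htC⟩ :=
    (csInf_lt_iff ⟨0, fun _ ht => ht.1.le⟩ hne).1 (hC.trans_lt (lt_add_one C))
  have hh0 : ∀ᵐ x, 0 ≤ h x ∧ h x ≤ P := hh.mono fun _ hx => ⟨zero_le_one.trans hx.1, hx.2⟩
  calc ∫ x, ‖u x‖ ^ h x ≤ max 1 (t ^ P) :=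
        integral_rpow_le_of_integral_div_rpow_le_one (fun _ => norm_nonneg _) ht hh0 hui
          (integrable_div_rpow hum.norm hhm (fun _ => norm_nonneg _) ht hh0 hui) ht1
    _ ≤ max 1 ((C + 1) ^ P) := max_le_max le_rfl (Real.rpow_le_rpow ht.le htC.le hP)

/-- Brezis–Lieb lemma, first version: if `η_n → η` a.e. and the
`L^{h(x)}` norms of `η_n` are bounded, then `η ∈ L^{h(x)}` and
`∫(|η_n|^{h(x)} - |η_n - η|^{h(x)} - |η|^{h(x)}) → 0`. -/
theorem brezis_lieb_first {N m : ℕ} (h : RN N → ℝ) (η : ℕ → RN N → Rm m) (η₀ : RN N → Rm m)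
    (hhm : Measurable h) (hηm : ∀ n, Measurable (η n)) (hη₀m : Measurable η₀)
    (hlow : ∀ᵐ x : RN N, 1 ≤ h x) (hbd : ∃ C : ℝ, ∀ᵐ x : RN N, h x ≤ C)
    (hmem : ∀ n, Integrable (fun x => ‖η n x‖ ^ h x) (volume : Measure (RN N)))
    (hae : ∀ᵐ x : RN N, Tendsto (fun n => η n x) atTop (nhds (η₀ x)))
    (hsup : ∃ C : ℝ, ∀ n, luxNormV h (η n) ≤ C) :
    Integrable (fun x => ‖η₀ x‖ ^ h x) (volume : Measure (RN N)) ∧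
    Tendsto (fun n => ∫ x, (‖η n x‖ ^ h x - ‖η n x - η₀ x‖ ^ h x - ‖η₀ x‖ ^ h x))
      atTop (nhds 0) := by
  obtain ⟨C₀, hC₀⟩ := hbd
  obtain ⟨C, hC⟩ := hsup
  set P := max C₀ 1
  have hP : 0 ≤ P := zero_le_one.trans (le_max_right _ _)
  have hh : ∀ᵐ x : RN N, 1 ≤ h x ∧ h x ≤ P := by
    filter_upwards [hlow, hC₀] with x h1 h2 using ⟨h1, h2.trans (le_max_left _ _)⟩
  have hh0 : ∀ᵐ x : RN N, 0 ≤ h x ∧ h x ≤ P := hh.mono fun _ hx => ⟨zero_le_one.trans hx.1, hx.2⟩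
  have hmod n : ∫ x, ‖η n x‖ ^ h x ≤ max 1 ((C + 1) ^ P) :=
    integral_rpow_norm_le_of_luxNormV_le hhm (hηm n) hh hP (hmem n) (hC n)
  obtain ⟨hη₀i, hmod₀⟩ := integrable_and_integral_le_of_tendsto hmem
    (fun n => ae_of_all _ fun x => Real.rpow_nonneg (norm_nonneg _) _)
    (by filter_upwards [hae, hh] with x hx hhx using hx.norm.rpow_const (Or.inr (by linarith)))
    hmod
  refine ⟨hη₀i, ?_⟩
  have hdiff n := integrable_rpow_norm_sub (hηm n) hη₀m hhm hh0 (hmem n) hη₀i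
  have hdiff_le n : ∫ x, ‖η n x - η₀ x‖ ^ h x ≤ 2 ^ P * (max 1 ((C + 1) ^ P) * 2) :=
    (hdiff n).2.trans <| by gcongr; linarith [hmod n]
  refine tendsto_integral_zero_of_abs_le_eps_mul_add
    (fun n => ((hmem n).sub (hdiff n).1).sub hη₀i) (fun n => (hdiff n).1)
    (fun n => ae_of_all _ fun x => Real.rpow_nonneg (norm_nonneg _) _) hdiff_le
    hη₀i (fun ε hε => ?_) ?_
  · obtain ⟨K, hK⟩ := exists_abs_rpow_norm_sub_le (E := Rm m) P hε
    exact ⟨K, fun n => hh0.mono fun x hx => hK _ hx.1 hx.2 _ _⟩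
  · filter_upwards [hae, hh] with x hx hhx
    exact tendsto_rpow_norm_sub_rpow_norm_sub (by linarith) hx
end
end

section
/- Brezis–Lieb lemma for gradients of power-type nonlinearities: if (η_n) ⊂ L^{h(x)}(R^N, R^m) satisfies η_n(x) → η(x) a.e. and sup_n ||η_n||_{L^{h(x)}} < ∞, then ∫ | |η_n|^{h(x)−2} η_n − |η_n − η|^{h(x)−2}(η_n − η) − |η|^{h(x)−2} η |^{h'(x)} dx → 0 as n → ∞, where h'(x) = h(x)/(h(x)−1). -/
open MeasureTheory Filter Topology

noncomputable section

/-!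
`Φ_p(v) = ‖v‖^{p-2} v` is continuous in `(v, p)` for `p > 1`, so the defect
`‖Φ_p(a) - Φ_p(a - b) - Φ_p(b)‖^{p/(p-1)}` is continuous, vanishes at `b = 0`, and is positively
homogeneous of degree `p` in `(a, b)`. Compactness of the unit ball of `ℝ^m` and of the range
`[c, C]` of the exponent then gives, for every `ε > 0`, a `D_ε` with
`defect ≤ ε ‖a‖^p + D_ε ‖b‖^p`. Take `a = η_n`, `b = η`: the Luxemburg norms bound the modulars
`∫ ‖η_n‖^h` uniformly, Fatou's lemma puts `‖η‖^h` in `L¹`, and the positive part of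
`defect - ε ‖η_n‖^h` tends to `0` a.e. under the integrable majorant `D_ε ‖η‖^h`. Dominated
convergence leaves `limsup ∫ defect ≤ ε sup_n ∫ ‖η_n‖^h` for every `ε`.
-/

section PowerMap

variable {E : Type*} [NormedAddCommGroup E] [NormedSpace ℝ E]

def powerMap (p : ℝ) (v : E) : E := (‖v‖ ^ (p - 2)) • v

@[simp]
lemma powerMap_zero (p : ℝ) : powerMap p (0 : E) = 0 := by simp [powerMap]

lemma norm_powerMap {p : ℝ} (hp : p ≠ 1) (v : E) : ‖powerMap p v‖ = ‖v‖ ^ (p - 1) := by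
  rcases eq_or_ne v 0 with rfl | hv
  · simp [Real.zero_rpow (sub_ne_zero.2 hp)]
  rw [powerMap, norm_smul, Real.norm_of_nonneg (by positivity),
    ← Real.rpow_add_one (norm_ne_zero_iff.2 hv)]
  ring_nf

lemma powerMap_smul {p r : ℝ} (hr : 0 < r) (v : E) :
    powerMap p (r • v) = r ^ (p - 1) • powerMap p v := by
  rw [powerMap, powerMap, norm_smul, Real.norm_of_nonneg hr.le,
    Real.mul_rpow hr.le (norm_nonneg v), smul_smul, smul_smul, mul_right_comm,
    ← Real.rpow_add_one hr.ne']
  ring_nf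

lemma continuousAt_powerMap {p : ℝ} (hp : 1 < p) (v : E) :
    ContinuousAt (fun q : E × ℝ => powerMap q.2 q.1) (v, p) := by
  rcases eq_or_ne v 0 with rfl | hv
  · -- near `(0, p)` the norm is `‖w‖ ^ (q - 1)`, and `rpow` is continuous at `(0, p - 1)`
    have hnorm : ∀ᶠ q : E × ℝ in 𝓝 (0, p), ‖powerMap q.2 q.1‖ = ‖q.1‖ ^ (q.2 - 1) :=
      (continuous_snd.continuousAt.eventually_ne (x := ((0 : E), p)) hp.ne').mono
        fun q hq => norm_powerMap hq q.1
    have hlim : Tendsto (fun q : E × ℝ => ‖q.1‖ ^ (q.2 - 1)) (𝓝 (0, p)) (𝓝 0) := by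
      have := (continuous_fst.norm.continuousAt (x := ((0 : E), p))).rpow
        (continuous_snd.sub continuous_const).continuousAt (Or.inr (sub_pos.2 hp))
      simpa [Real.zero_rpow (sub_pos.2 hp).ne'] using this.tendsto
    simpa [ContinuousAt] using
      tendsto_zero_iff_norm_tendsto_zero.2 (hlim.congr' (hnorm.mono fun q hq => hq.symm))
  · exact (continuous_fst.norm.continuousAt.rpow
      (continuous_snd.sub continuous_const).continuousAt
      (Or.inl (norm_ne_zero_iff.2 hv))).smul continuous_fst.continuousAt

def powerMapDefect (p : ℝ) (a b : E) : ℝ :=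
  ‖powerMap p a - powerMap p (a - b) - powerMap p b‖ ^ (p / (p - 1))

lemma powerMapDefect_nonneg (p : ℝ) (a b : E) : 0 ≤ powerMapDefect p a b := by
  unfold powerMapDefect; positivity

lemma powerMapDefect_zero_right {p : ℝ} (hp : 1 < p) (a : E) : powerMapDefect p a 0 = 0 := by
  simp [powerMapDefect, Real.zero_rpow (div_pos (by linarith) (sub_pos.2 hp)).ne']

lemma powerMapDefect_self {p : ℝ} (hp : 1 < p) (a : E) : powerMapDefect p a a = 0 := by
  simp [powerMapDefect, Real.zero_rpow (div_pos (by linarith) (sub_pos.2 hp)).ne']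

lemma powerMapDefect_smul {p r : ℝ} (hp : 1 < p) (hr : 0 < r) (a b : E) :
    powerMapDefect p (r • a) (r • b) = r ^ p * powerMapDefect p a b := by
  rw [powerMapDefect, powerMapDefect, ← smul_sub, powerMap_smul hr, powerMap_smul hr,
    powerMap_smul hr, ← smul_sub, ← smul_sub, norm_smul, Real.norm_of_nonneg (by positivity),
    Real.mul_rpow (by positivity) (norm_nonneg _), ← Real.rpow_mul hr.le,
    mul_div_cancel₀ _ (sub_pos.2 hp).ne']

lemma continuousAt_powerMapDefect {p : ℝ} (hp : 1 < p) (a b : E) :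
    ContinuousAt (fun q : (E × E) × ℝ => powerMapDefect q.2 q.1.1 q.1.2) ((a, b), p) := by
  have hΦ : ∀ g : (E × E) × ℝ → E, Continuous g →
      ContinuousAt (fun q => powerMap q.2 (g q)) ((a, b), p) := fun g hg =>
    (continuousAt_powerMap hp (g ((a, b), p))).comp (f := fun q => (g q, q.2))
      (hg.prodMk continuous_snd).continuousAt
  have hexp : ContinuousAt (fun q : (E × E) × ℝ => q.2 / (q.2 - 1)) ((a, b), p) :=
    continuous_snd.continuousAt.div (continuous_snd.sub continuous_const).continuousAt
      (sub_pos.2 hp).ne'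
  exact ((((hΦ _ (by fun_prop)).sub (hΦ _ (by fun_prop))).sub (hΦ _ (by fun_prop))).norm).rpow
    hexp (Or.inr (div_pos (by linarith) (sub_pos.2 hp)))

lemma Measurable.powerMap [MeasurableSpace E] [BorelSpace E] [SecondCountableTopology E]
    {α : Type*} [MeasurableSpace α] {p : α → ℝ} {v : α → E} (hp : Measurable p)
    (hv : Measurable v) : Measurable fun x => powerMap (p x) (v x) :=
  (hv.norm.pow (hp.sub measurable_const)).smul hv

lemma Measurable.powerMapDefect [MeasurableSpace E] [BorelSpace E] [SecondCountableTopology E]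
    {α : Type*} [MeasurableSpace α] {p : α → ℝ} {a b : α → E} (hp : Measurable p)
    (ha : Measurable a) (hb : Measurable b) :
    Measurable fun x => powerMapDefect (p x) (a x) (b x) :=
  Measurable.pow (((hp.powerMap ha).sub (hp.powerMap (ha.sub hb))).sub (hp.powerMap hb)).norm
    (hp.div (hp.sub measurable_const))

lemma continuousOn_powerMapDefect :
    ContinuousOn (fun q : (E × E) × ℝ => powerMapDefect q.2 q.1.1 q.1.2) {q | 1 < q.2} :=
  fun q hq => (continuousAt_powerMapDefect hq q.1.1 q.1.2).continuousWithinAt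

variable [ProperSpace E]

lemma exists_powerMapDefect_le_of_norm_le {c C : ℝ} (hc : 1 < c) :
    ∃ B, 0 ≤ B ∧ ∀ (a b : E) (p : ℝ), ‖a‖ ≤ 1 → ‖b‖ ≤ 1 → p ∈ Set.Icc c C →
      powerMapDefect p a b ≤ B := by
  have hK : IsCompact ((Metric.closedBall (0 : E) 1 ×ˢ Metric.closedBall (0 : E) 1) ×ˢ
      Set.Icc c C) :=
    ((isCompact_closedBall _ _).prod (isCompact_closedBall _ _)).prod isCompact_Icc
  obtain ⟨B, hB⟩ := hK.exists_bound_of_continuousOn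
    (continuousOn_powerMapDefect.mono fun q hq => hc.trans_le hq.2.1)
  refine ⟨max B 0, le_max_right _ _, fun a b p ha hb hp => le_max_of_le_left ?_⟩
  simpa [Real.norm_of_nonneg (powerMapDefect_nonneg _ _ _)] using
    hB ((a, b), p) ⟨⟨by simpa using ha, by simpa using hb⟩, hp⟩

lemma exists_powerMapDefect_lt_of_norm_lt {c C ε : ℝ} (hc : 1 < c) (hε : 0 < ε) :
    ∃ δ, 0 < δ ∧ δ ≤ 1 ∧ ∀ (a b : E) (p : ℝ), ‖a‖ ≤ 1 → ‖b‖ < δ → p ∈ Set.Icc c C →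
      powerMapDefect p a b < ε := by
  have hK : IsCompact ((Metric.closedBall (0 : E) 1 ×ˢ Metric.closedBall (0 : E) 1) ×ˢ
      Set.Icc c C) :=
    ((isCompact_closedBall _ _).prod (isCompact_closedBall _ _)).prod isCompact_Icc
  obtain ⟨δ, hδ, hunif⟩ := Metric.uniformContinuousOn_iff.1
    (hK.uniformContinuousOn_of_continuous
      (continuousOn_powerMapDefect.mono fun q hq => hc.trans_le hq.2.1)) ε hε
  refine ⟨min δ 1, lt_min hδ one_pos, min_le_right _ _, fun a b p ha hb hp => ?_⟩
  have := hunif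
    ((a, b), p) ⟨⟨by simpa using ha, by simpa using hb.le.trans (min_le_right _ _)⟩, hp⟩
    ((a, 0), p) ⟨⟨by simpa using ha, by simp⟩, hp⟩
    (by simpa [Prod.dist_eq] using hb.trans_le (min_le_left _ _))
  simpa [Real.dist_eq, powerMapDefect_zero_right (hc.trans_le hp.1),
    abs_of_nonneg (powerMapDefect_nonneg _ _ _)] using this

theorem exists_powerMapDefect_le_eps_mul_add {c C ε : ℝ} (hc : 1 < c) (hε : 0 < ε) :
    ∃ D, ∀ (a b : E) (p : ℝ), p ∈ Set.Icc c C →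
      powerMapDefect p a b ≤ ε * ‖a‖ ^ p + D * ‖b‖ ^ p := by
  obtain ⟨δ, hδ, hδ1, hsmall⟩ := exists_powerMapDefect_lt_of_norm_lt (E := E) (C := C) hc hε
  obtain ⟨B, hB, hbound⟩ := exists_powerMapDefect_le_of_norm_le (E := E) (C := C) hc
  refine ⟨B / δ ^ C, fun a b p hp => ?_⟩
  have hp1 : 1 < p := hc.trans_le hp.1
  set r := max ‖a‖ ‖b‖
  rcases ((norm_nonneg a).trans (le_max_left _ _) : 0 ≤ r).eq_or_lt with hr | hr
  · have ha : a = 0 := norm_le_zero_iff.1 (hr ▸ le_max_left _ _)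
    have hb : b = 0 := norm_le_zero_iff.1 (hr ▸ le_max_right _ _)
    simp [ha, hb, powerMapDefect_zero_right hp1, Real.zero_rpow (by linarith : p ≠ 0)]
  have hscale : powerMapDefect p a b = r ^ p * powerMapDefect p (r⁻¹ • a) (r⁻¹ • b) := by
    rw [← powerMapDefect_smul hp1 hr, smul_inv_smul₀ hr.ne', smul_inv_smul₀ hr.ne']
  have hnorm : ∀ v : E, ‖r⁻¹ • v‖ = ‖v‖ / r := fun v => by
    rw [norm_smul, norm_inv, Real.norm_of_nonneg hr.le, inv_mul_eq_div]
  have ha1 : ‖r⁻¹ • a‖ ≤ 1 := by rw [hnorm, div_le_one hr]; exact le_max_left _ _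
  have hb1 : ‖r⁻¹ • b‖ ≤ 1 := by rw [hnorm, div_le_one hr]; exact le_max_right _ _
  rcases lt_or_ge ‖r⁻¹ • b‖ δ with hb | hb
  · have hra : r = ‖a‖ := by
      have hbr : ‖b‖ < r := by rw [hnorm, div_lt_iff₀ hr] at hb; nlinarith
      exact max_eq_left ((lt_max_iff.1 hbr).resolve_right (lt_irrefl _)).le
    calc powerMapDefect p a b ≤ r ^ p * ε :=
          hscale ▸ mul_le_mul_of_nonneg_left (hsmall _ _ _ ha1 hb hp).le (by positivity)
      _ ≤ ε * ‖a‖ ^ p + B / δ ^ C * ‖b‖ ^ p := by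
          rw [hra, mul_comm]; exact le_add_of_nonneg_right (by positivity)
  · have hrb : r ^ p ≤ ‖b‖ ^ p / δ ^ C := by
      rw [le_div_iff₀ (by positivity)]
      calc r ^ p * δ ^ C ≤ r ^ p * δ ^ p := mul_le_mul_of_nonneg_left
            (Real.rpow_le_rpow_of_exponent_ge hδ hδ1 hp.2) (by positivity)
        _ = (r * δ) ^ p := (Real.mul_rpow hr.le hδ.le).symm
        _ ≤ ‖b‖ ^ p := Real.rpow_le_rpow (by positivity)
            (by rw [hnorm, le_div_iff₀ hr] at hb; linarith) (by linarith)
    calc powerMapDefect p a b ≤ r ^ p * B :=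
          hscale ▸ mul_le_mul_of_nonneg_left (hbound _ _ _ ha1 hb1 hp) (by positivity)
      _ ≤ ‖b‖ ^ p / δ ^ C * B := by gcongr
      _ = B / δ ^ C * ‖b‖ ^ p := by ring
      _ ≤ ε * ‖a‖ ^ p + B / δ ^ C * ‖b‖ ^ p := le_add_of_nonneg_left (by positivity)

end PowerMap

section Integrals

variable {α : Type*} [MeasurableSpace α] {μ : Measure α}

lemma integrable_of_tendsto_of_integral_le {F : ℕ → α → ℝ} {f : α → ℝ} {M : ℝ}
    (hF : ∀ n, Integrable (F n) μ) (hF0 : ∀ n, 0 ≤ᵐ[μ] F n) (hFM : ∀ n, ∫ x, F n x ∂μ ≤ M)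
    (hlim : ∀ᵐ x ∂μ, Tendsto (fun n => F n x) atTop (𝓝 (f x))) : Integrable f μ := by
  refine ⟨aestronglyMeasurable_of_tendsto_ae _ (fun n => (hF n).1) hlim, ?_⟩
  have hlin : ∀ n, ∫⁻ x, ‖F n x‖ₑ ∂μ ≤ ENNReal.ofReal M := fun n => by
    rw [← ofReal_integral_norm_eq_lintegral_enorm (hF n),
      integral_congr_ae ((hF0 n).mono fun x hx => Real.norm_of_nonneg hx)]
    exact ENNReal.ofReal_le_ofReal (hFM n)
  calc ∫⁻ x, ‖f x‖ₑ ∂μ = ∫⁻ x, liminf (fun n => ‖F n x‖ₑ) atTop ∂μ :=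
        lintegral_congr_ae (hlim.mono fun x hx => hx.enorm.liminf_eq.symm)
    _ ≤ liminf (fun n => ∫⁻ x, ‖F n x‖ₑ ∂μ) atTop :=
        lintegral_liminf_le' fun n => (hF n).1.aemeasurable.enorm
    _ ≤ ENNReal.ofReal M := liminf_le_of_frequently_le' (Frequently.of_forall hlin)
    _ < ⊤ := ENNReal.ofReal_lt_top

theorem tendsto_integral_zero_of_ae_le_eps_mul_add {f W : ℕ → α → ℝ} {K : ℝ}
    (hf : ∀ n, AEStronglyMeasurable (f n) μ) (hf0 : ∀ n, 0 ≤ᵐ[μ] f n)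
    (hlim : ∀ᵐ x ∂μ, Tendsto (fun n => f n x) atTop (𝓝 0))
    (hW : ∀ n, Integrable (W n) μ) (hW0 : ∀ n, 0 ≤ᵐ[μ] W n) (hWK : ∀ n, ∫ x, W n x ∂μ ≤ K)
    (hdom : ∀ ε > 0, ∃ G : α → ℝ, Integrable G μ ∧ ∀ n, ∀ᵐ x ∂μ, f n x ≤ ε * W n x + G x) :
    Tendsto (fun n => ∫ x, f n x ∂μ) atTop (𝓝 0) := by
  refine tendsto_order.2 ⟨fun a ha => Eventually.of_forall fun n => ha.trans_le
    (integral_nonneg_of_ae (hf0 n)), fun a ha => ?_⟩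
  set ε := a / (2 * (|K| + 1))
  have hε : 0 < ε := by positivity
  have hεK : ε * K < a / 2 := by
    have : ε * (|K| + 1) = a / 2 := by simp only [ε]; field_simp
    nlinarith [le_abs_self K]
  obtain ⟨G, hG, hfG⟩ := hdom ε hε
  -- the part of `f n` not controlled by `ε * W n` is dominated by `|G|` and tends to `0`
  set g : ℕ → α → ℝ := fun n x => max (f n x - ε * W n x) 0
  have hg_meas : ∀ n, AEStronglyMeasurable (g n) μ := fun n =>
    ((hf n).sub ((hW n).1.const_mul ε)).sup aestronglyMeasurable_const
  have hg_bound : ∀ n, ∀ᵐ x ∂μ, ‖g n x‖ ≤ ‖G x‖ := fun n => (hfG n).mono fun x hx => by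
    rw [Real.norm_of_nonneg (le_max_right _ _)]
    exact max_le (by linarith [le_abs_self (G x), Real.norm_eq_abs (G x)]) (norm_nonneg _)
  have hg_lim : Tendsto (fun n => ∫ x, g n x ∂μ) atTop (𝓝 0) := by
    simpa using tendsto_integral_of_dominated_convergence (f := fun _ => 0) _ hg_meas hG.norm
      hg_bound (by
        filter_upwards [hlim, ae_all_iff.2 hf0, ae_all_iff.2 hW0] with x hx hx0 hxW
        simp only [Pi.zero_apply] at hx0 hxW
        refine squeeze_zero (fun n => le_max_right _ _) (fun n => max_le ?_ (hx0 n)) hx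
        nlinarith [hxW n])
  have hf_le : ∀ n, ∫ x, f n x ∂μ ≤ ∫ x, g n x ∂μ + a / 2 := fun n => by
    have hg_int : Integrable (g n) μ := hG.norm.mono' (hg_meas n) (hg_bound n)
    calc ∫ x, f n x ∂μ ≤ ∫ x, (g n x + ε * W n x) ∂μ :=
          integral_mono_of_nonneg (hf0 n) (hg_int.add ((hW n).const_mul ε))
            (Eventually.of_forall fun x => by linarith [le_max_left (f n x - ε * W n x) 0])
      _ = ∫ x, g n x ∂μ + ε * ∫ x, W n x ∂μ := by
          rw [integral_add hg_int ((hW n).const_mul ε), integral_const_mul]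
      _ ≤ ∫ x, g n x ∂μ + a / 2 := by nlinarith [hWK n]
  filter_upwards [hg_lim.eventually_lt_const (half_pos ha)] with n hn
  linarith [hf_le n]

end Integrals

lemma integral_norm_rpow_le_of_luxNormV_lt {N m : ℕ} {h : RN N → ℝ} {u : RN N → Rm m}
    {C T : ℝ} (hhm : Measurable h) (hu : Measurable u) (hh : ∀ᵐ x, h x ∈ Set.Icc 1 C)
    (hint : Integrable (fun x => ‖u x‖ ^ h x)) (hT : 1 ≤ T) (hlux : luxNormV h u < T) :
    ∫ x, ‖u x‖ ^ h x ≤ T ^ C := by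
  set I := ∫ x, ‖u x‖ ^ h x
  have hI : 0 ≤ I := integral_nonneg fun x => by positivity
  have hpow_le : ∀ {s S : ℝ}, 0 ≤ s → s ≤ S → 1 ≤ S → ∀ᵐ x, s ^ h x ≤ S ^ C :=
    fun hs hsS hS => hh.mono fun x hx => (Real.rpow_le_rpow hs hsS (by linarith [hx.1])).trans
      (Real.rpow_le_rpow_of_exponent_le hS hx.2)
  have hdiv : ∀ s > 0, ∀ x, (‖u x‖ / s) ^ h x = s⁻¹ ^ h x * ‖u x‖ ^ h x := fun s hs x => by
    rw [div_eq_inv_mul, Real.mul_rpow (by positivity) (norm_nonneg _)]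
  have hI1 : I + 1 ∈ {t : ℝ | 0 < t ∧ ∫ x, (‖u x‖ / t) ^ h x ≤ 1} := by
    refine ⟨by linarith, ?_⟩
    calc ∫ x, (‖u x‖ / (I + 1)) ^ h x ≤ ∫ x, (I + 1)⁻¹ * ‖u x‖ ^ h x := by
          refine integral_mono_of_nonneg (ae_of_all _ fun x => by positivity) (hint.const_mul _)
            (hh.mono fun x hx => ?_)
          dsimp only
          rw [hdiv _ (by linarith)]
          gcongr
          simpa using Real.rpow_le_rpow_of_exponent_ge (by positivity)
            (inv_le_one_of_one_le₀ (by linarith)) hx.1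
      _ = I / (I + 1) := by rw [integral_const_mul, inv_mul_eq_div]
      _ ≤ 1 := div_le_one_of_le₀ (by linarith) (by linarith)
  obtain ⟨t, ⟨ht, htI⟩, htT⟩ := exists_lt_of_csInf_lt ⟨_, hI1⟩ hlux
  -- `∫` is `0` on non-integrable functions, so `htI` says nothing until this is shown
  have hint_t : Integrable (fun x => (‖u x‖ / t) ^ h x) := by
    refine (hint.const_mul (max 1 t⁻¹ ^ C)).mono'
      ((hu.norm.div_const t).pow hhm).aestronglyMeasurable ?_
    filter_upwards [hpow_le (inv_nonneg.2 ht.le) (le_max_right 1 t⁻¹) (le_max_left _ _)]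
      with x hx
    rw [Real.norm_of_nonneg (by positivity), hdiv t ht]
    gcongr
  calc I ≤ ∫ x, T ^ C * (‖u x‖ / t) ^ h x := by
        refine integral_mono_of_nonneg (ae_of_all _ fun x => by positivity)
          (hint_t.const_mul _) ?_
        filter_upwards [hpow_le ht.le htT.le hT] with x hx
        rw [Real.div_rpow (norm_nonneg _) ht.le, mul_div_assoc']
        exact (le_div_iff₀ (by positivity)).2 (by rw [mul_comm]; gcongr)
    _ = T ^ C * ∫ x, (‖u x‖ / t) ^ h x := integral_const_mul _ _
    _ ≤ T ^ C := mul_le_of_le_one_right (by positivity) htI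

/-- Brezis–Lieb lemma, third version: if `η_n → η` a.e. and the
`L^{h(x)}` norms of `η_n` are bounded, then
`∫ | |η_n|^{h-2}η_n - |η_n-η|^{h-2}(η_n-η) - |η|^{h-2}η |^{h'} → 0`, `h' = h/(h-1)`. -/
theorem brezis_lieb_third {N m : ℕ} (h : RN N → ℝ) (η : ℕ → RN N → Rm m) (η₀ : RN N → Rm m)
    (hhm : Measurable h) (hηm : ∀ n, Measurable (η n)) (hη₀m : Measurable η₀)
    (hlow : ∃ c : ℝ, 1 < c ∧ ∀ᵐ x : RN N, c ≤ h x) (hbd : ∃ C : ℝ, ∀ᵐ x : RN N, h x ≤ C)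
    (hmem : ∀ n, Integrable (fun x => ‖η n x‖ ^ h x) (volume : Measure (RN N)))
    (hae : ∀ᵐ x : RN N, Tendsto (fun n => η n x) atTop (nhds (η₀ x)))
    (hsup : ∃ C : ℝ, ∀ n, luxNormV h (η n) ≤ C) :
    Tendsto (fun n => ∫ x,
        ‖(‖η n x‖ ^ (h x - 2)) • η n x - (‖η n x - η₀ x‖ ^ (h x - 2)) • (η n x - η₀ x)
          - (‖η₀ x‖ ^ (h x - 2)) • η₀ x‖ ^ (h x / (h x - 1)))
      atTop (nhds 0) := by
  obtain ⟨c, hc, hhc⟩ := hlow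
  obtain ⟨C, hhC⟩ := hbd
  obtain ⟨L, hL⟩ := hsup
  have hh : ∀ᵐ x, h x ∈ Set.Icc c C := hhc.and hhC
  have hmod : ∀ n, ∫ x, ‖η n x‖ ^ h x ≤ (|L| + 1) ^ C := fun n =>
    integral_norm_rpow_le_of_luxNormV_lt hhm (hηm n)
      (hh.mono fun x hx => ⟨hc.le.trans hx.1, hx.2⟩) (hmem n) (by linarith [abs_nonneg L])
      ((hL n).trans_lt (by linarith [le_abs_self L]))
  have hη₀ : Integrable fun x => ‖η₀ x‖ ^ h x := by
    refine integrable_of_tendsto_of_integral_le hmem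
      (fun n => ae_of_all _ fun x => by positivity) hmod ?_
    filter_upwards [hae, hh] with x hx hxh
    exact hx.norm.rpow_const (Or.inr (by linarith [hxh.1]))
  have hlim : ∀ᵐ x, Tendsto (fun n => powerMapDefect (h x) (η n x) (η₀ x)) atTop (𝓝 0) := by
    filter_upwards [hae, hh] with x hx hxh
    have hp : 1 < h x := hc.trans_le hxh.1
    simpa [Function.comp_def, powerMapDefect_self hp] using
      (continuousAt_powerMapDefect hp (η₀ x) (η₀ x)).tendsto.comp
        ((hx.prodMk_nhds tendsto_const_nhds).prodMk_nhds tendsto_const_nhds)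
  refine tendsto_integral_zero_of_ae_le_eps_mul_add
    (fun n => (hhm.powerMapDefect (hηm n) hη₀m).aestronglyMeasurable)
    (fun n => ae_of_all _ fun x => powerMapDefect_nonneg _ _ _) hlim hmem
    (fun n => ae_of_all _ fun x => by positivity) hmod fun ε hε => ?_
  obtain ⟨D, hD⟩ := exists_powerMapDefect_le_eps_mul_add (E := Rm m) (C := C) hc hε
  exact ⟨_, hη₀.const_mul D, fun n => hh.mono fun x hx => hD _ _ _ hx⟩
end
end
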